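/- For 0 ≤ j ≤ r−1 and 0 ≤ k ≤ n−j−2, the polynomial R_j(z) := −Q_n^j(z) π_n(z) + P_n^j(z) · (−2πi κ_{n-1}² π_{n-1}(z)) satisfies ∫_ℝ R_j(x) π_k(x) e^{-V(x)} dx = 0. -/

import Mathlib

/-!
Every `c_i` carries the factor `−2πi κ_{n-1}²`, so on the real line `R_j` is that constant times
the real polynomial `−T_{n-1} π_n + T_n π_{n-1}`, where `T_n`, `T_{n-1}` are the polynomials of
degree `≤ j` formed by the top `j + 1` coefficients of `π_n`, `π_{n-1}`. Hence `R_j π_k` is a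
combination of `π_n` and `π_{n-1}` with coefficients of degree `≤ j + k ≤ n − 2`, and both terms
integrate to zero because `π_N` is orthogonal to every polynomial of degree `< N`, these being
spanned by `π_0, …, π_{N-1}`.
-/

open MeasureTheory Polynomial

noncomputable section

/-- The coefficient `b_j` of `z^{n-j}` in `π_n`. -/
def bcoef (n : ℕ) (p : ℕ → Polynomial ℝ) (j : ℕ) : ℂ :=
  if j ≤ n then (((p n).coeff (n - j) : ℝ) : ℂ) else 0

/-- The coefficient `c_j` of `z^{n-j}` in `−2πi κ_{n-1}² π_{n-1}`. -/
def ccoef (n : ℕ) (p : ℕ → Polynomial ℝ) (κ : ℕ → ℝ) (j : ℕ) : ℂ :=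
  if j ≤ n then
    -(2 * Real.pi * Complex.I) * ((κ (n - 1) : ℝ) : ℂ) ^ 2 * (((p (n - 1)).coeff (n - j) : ℝ) : ℂ)
  else 0

/-- The truncation `b_0 z^j + b_1 z^{j-1} + ⋯ + b_j` of a coefficient sequence. -/
def Ptrunc (b : ℕ → ℂ) (j : ℕ) (z : ℂ) : ℂ :=
  ∑ m ∈ Finset.range (j + 1), b m * z ^ (j - m)

/-- The polynomial `R_j(z) = −Q_n^j(z) π_n(z) + P_n^j(z) · (−2πi κ_{n-1}² π_{n-1}(z))`. -/
def Rfun (n : ℕ) (p : ℕ → Polynomial ℝ) (κ : ℕ → ℝ) (j : ℕ) (z : ℂ) : ℂ :=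
  -(Ptrunc (ccoef n p κ) j z) * Polynomial.aeval z (p n) +
    Ptrunc (bcoef n p) j z *
      (-(2 * Real.pi * Complex.I) * ((κ (n - 1) : ℝ) : ℂ) ^ 2 * Polynomial.aeval z (p (n - 1)))

namespace Polynomial

theorem Sequence.map_mul_eq_zero_of_degree_lt {R M : Type*} [CommRing R] [AddCommGroup M]
    [Module R M] (S : Sequence R) {N : ℕ} (hunit : ∀ i < N, IsUnit (S i).leadingCoeff)
    (L : R[X] →ₗ[R] M) (horth : ∀ i < N, L (S i * S N) = 0) {q : R[X]} (hq : q.degree < N) :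
    L (q * S N) = 0 := by
  have hspan : degreeLT R N ≤ LinearMap.ker (L ∘ₗ LinearMap.mulRight R (S N)) := by
    rw [← S.span_degreeLT hunit, Submodule.span_le]
    rintro _ ⟨i, hi, rfl⟩
    exact horth i hi
  exact hspan (mem_degreeLT.mpr hq)

theorem map_mul_eq_zero_of_monic_of_natDegree_lt {R M : Type*} [CommRing R] [Nontrivial R]
    [AddCommGroup M] [Module R M] {p : ℕ → R[X]} (hmonic : ∀ k, (p k).Monic)
    (hdeg : ∀ k, (p k).natDegree = k) (L : R[X] →ₗ[R] M)
    (horth : ∀ i N, i < N → L (p i * p N) = 0) {q : R[X]} {N : ℕ} (hq : q.natDegree < N) :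
    L (q * p N) = 0 :=
  let S : Sequence R :=
    ⟨p, fun k => by rw [degree_eq_natDegree (hmonic k).ne_zero, hdeg k]⟩
  S.map_mul_eq_zero_of_degree_lt (fun i _ => by simp [S, (hmonic i).leadingCoeff]) L
    (fun i hi => horth i N hi) (degree_le_natDegree.trans_lt (by exact_mod_cast hq))

end Polynomial

theorem integrable_eval_mul_of_integrable_abs_pow_mul {μ : Measure ℝ} {w : ℝ → ℝ}
    (hw : ∀ k : ℕ, Integrable (fun x => |x| ^ k * w x) μ) (q : ℝ[X]) :
    Integrable (fun x => q.eval x * w x) μ := by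
  have hmeas : AEStronglyMeasurable w μ := by simpa using (hw 0).aestronglyMeasurable
  simp_rw [eval_eq_sum_range, Finset.sum_mul]
  refine integrable_finsetSum _ fun i _ => ?_
  refine ((hw i).const_mul (q.coeff i)).mono
    ((continuous_const.mul (continuous_pow i)).aestronglyMeasurable.mul hmeas) ?_
  filter_upwards with x
  simp [mul_assoc]

def momentFunctional (μ : Measure ℝ) (w : ℝ → ℝ)
    (hw : ∀ q : ℝ[X], Integrable (fun x => q.eval x * w x) μ) : ℝ[X] →ₗ[ℝ] ℝ where
  toFun q := ∫ x, q.eval x * w x ∂μ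
  map_add' q r := by simp only [eval_add, add_mul]; exact integral_add (hw q) (hw r)
  map_smul' c q := by simp [mul_assoc, integral_const_mul]

/-- The polynomial `q_{n-j} + q_{n-j+1} X + ⋯ + q_n X^j` built from the top `j + 1` coefficients. -/
def topCoeffs (q : ℝ[X]) (n j : ℕ) : ℝ[X] :=
  ∑ m ∈ Finset.range (j + 1), C (q.coeff (n - m)) * X ^ (j - m)

theorem natDegree_topCoeffs_le (q : ℝ[X]) (n j : ℕ) : (topCoeffs q n j).natDegree ≤ j :=
  natDegree_sum_le_of_forall_le _ _ fun _ _ => (natDegree_C_mul_X_pow_le _ _).trans (Nat.sub_le _ _)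

theorem Ptrunc_ofReal_eq {b : ℕ → ℂ} {j n : ℕ} (c : ℂ) (q : ℝ[X])
    (hb : ∀ m ≤ j, b m = c * q.coeff (n - m)) (x : ℝ) :
    Ptrunc b j x = c * (((topCoeffs q n j).eval x : ℝ) : ℂ) := by
  simp only [Ptrunc, topCoeffs, eval_finsetSum, eval_mul, eval_C, eval_pow, eval_X]
  push_cast
  rw [Finset.mul_sum]
  refine Finset.sum_congr rfl fun m hm => ?_
  rw [hb m (Finset.mem_range_succ_iff.mp hm), mul_assoc]

def Rpoly (n : ℕ) (p : ℕ → ℝ[X]) (j : ℕ) : ℝ[X] :=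
  -topCoeffs (p (n - 1)) n j * p n + topCoeffs (p n) n j * p (n - 1)

theorem Rfun_ofReal {n j : ℕ} (hjn : j ≤ n) (p : ℕ → ℝ[X]) (κ : ℕ → ℝ) (x : ℝ) :
    Rfun n p κ j x = -(2 * Real.pi * Complex.I) * ((κ (n - 1) : ℝ) : ℂ) ^ 2 *
      (((Rpoly n p j).eval x : ℝ) : ℂ) := by
  have hb := Ptrunc_ofReal_eq (b := bcoef n p) (j := j) (n := n) 1 (p n)
    (fun m hm => by simp [bcoef, hm.trans hjn]) x
  have hc := Ptrunc_ofReal_eq (b := ccoef n p κ) (j := j) (n := n)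
    (-(2 * Real.pi * Complex.I) * ((κ (n - 1) : ℝ) : ℂ) ^ 2) (p (n - 1))
    (fun m hm => by simp only [ccoef, if_pos (hm.trans hjn)]) x
  have haeval : ∀ i, aeval (x : ℂ) (p i) = (((p i).eval x : ℝ) : ℂ) := fun i => by
    simpa using aeval_algebraMap_apply_eq_algebraMap_eval (A := ℂ) x (p i)
  rw [Rfun, hb, hc, haeval, haeval, Rpoly, eval_add, eval_mul, eval_mul, eval_neg]
  push_cast
  ring

theorem map_Rpoly_mul_eq_zero {M : Type*} [AddCommGroup M] [Module ℝ M] {p : ℕ → ℝ[X]}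
    (hmonic : ∀ k, (p k).Monic) (hdeg : ∀ k, (p k).natDegree = k) (L : ℝ[X] →ₗ[ℝ] M)
    (horth : ∀ i N, i < N → L (p i * p N) = 0) {n j : ℕ} {q : ℝ[X]}
    (hq : j + q.natDegree + 2 ≤ n) :
    L (Rpoly n p j * q) = 0 := by
  have hlow : ∀ i, (topCoeffs (p i) n j * q).natDegree < n - 1 := fun i =>
    (natDegree_mul_le.trans (Nat.add_le_add_right (natDegree_topCoeffs_le _ _ _) _)).trans_lt
      (by omega)
  have hsplit : Rpoly n p j * q =
      -(topCoeffs (p (n - 1)) n j * q * p n) + topCoeffs (p n) n j * q * p (n - 1) := by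
    rw [Rpoly]; ring
  have horthN {r : ℝ[X]} {N : ℕ} (hr : r.natDegree < N) : L (r * p N) = 0 :=
    map_mul_eq_zero_of_monic_of_natDegree_lt hmonic hdeg L horth hr
  rw [hsplit, map_add, map_neg, horthN ((hlow _).trans_le (Nat.sub_le _ _)), horthN (hlow _),
    neg_zero, add_zero]

theorem R_orthogonal_to_low_degree_general
    (n : ℕ)
    (V : ℝ → ℝ)
    (hVint : ∀ k : ℕ, MeasureTheory.Integrable (fun x : ℝ => |x| ^ k * Real.exp (-V x)))
    (p : ℕ → Polynomial ℝ)
    (hmonic : ∀ k, (p k).Monic)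
    (hdeg : ∀ k, (p k).natDegree = k)
    (horth : ∀ k m, k ≠ m → ∫ x : ℝ, (p k).eval x * (p m).eval x * Real.exp (-V x) = 0)
    (κ : ℕ → ℝ)
    (j k : ℕ) (hk : (k : ℤ) ≤ (n : ℤ) - j - 2) :
    ∫ x : ℝ, Rfun n p κ j (x : ℂ) * (((p k).eval x : ℝ) : ℂ) * ((Real.exp (-V x) : ℝ) : ℂ)
      = 0 := by
  have hjk : j + (p k).natDegree + 2 ≤ n := by rw [hdeg]; omega
  set L := momentFunctional volume (fun x => Real.exp (-V x))
    (integrable_eval_mul_of_integrable_abs_pow_mul hVint)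
  have horthL : ∀ i N, i < N → L (p i * p N) = 0 := fun i N hiN => by
    simpa [L, momentFunctional, mul_assoc] using horth i N hiN.ne
  set c : ℂ := -(2 * Real.pi * Complex.I) * ((κ (n - 1) : ℝ) : ℂ) ^ 2
  calc ∫ x : ℝ, Rfun n p κ j x * (((p k).eval x : ℝ) : ℂ) * ((Real.exp (-V x) : ℝ) : ℂ)
      = ∫ x : ℝ, c * (((Rpoly n p j * p k).eval x * Real.exp (-V x) : ℝ) : ℂ) := by
        refine integral_congr_ae (Filter.Eventually.of_forall fun x => ?_)
        dsimp only
        rw [Rfun_ofReal (by omega) p κ x, eval_mul]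
        push_cast
        ring
    _ = c * (L (Rpoly n p j * p k) : ℂ) := by rw [integral_const_mul, integral_complex_ofReal]; rfl
    _ = 0 := by rw [map_Rpoly_mul_eq_zero hmonic hdeg L horthL hjk]; simp

/-- For `0 ≤ j ≤ r−1` and `0 ≤ k ≤ n−j−2`, the polynomial
`R_j = −Q_n^j π_n + P_n^j (−2πi κ_{n-1}² π_{n-1})` is orthogonal to `π_k`. -/
theorem R_orthogonal_to_low_degree
    (n r : ℕ) (hr : 1 ≤ r) (hnr : r ≤ n)
    (V : ℝ → ℝ) (hV : Continuous V)
    (hVint : ∀ k : ℕ, MeasureTheory.Integrable (fun x : ℝ => |x| ^ k * Real.exp (-V x)))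
    (p : ℕ → Polynomial ℝ)
    (hmonic : ∀ k, (p k).Monic)
    (hdeg : ∀ k, (p k).natDegree = k)
    (horth : ∀ k m, k ≠ m → ∫ x : ℝ, (p k).eval x * (p m).eval x * Real.exp (-V x) = 0)
    (κ : ℕ → ℝ) (hκpos : ∀ k, 0 < κ k)
    (hκ : ∀ k, ∫ x : ℝ, ((p k).eval x) ^ 2 * Real.exp (-V x) = ((κ k) ^ 2)⁻¹)
    (j k : ℕ) (hj : j ≤ r - 1) (hk : (k : ℤ) ≤ (n : ℤ) - j - 2) :
    ∫ x : ℝ, Rfun n p κ j (x : ℂ) * (((p k).eval x : ℝ) : ℂ) * ((Real.exp (-V x) : ℝ) : ℂ)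
      = 0 :=
  R_orthogonal_to_low_degree_general n V hVint p hmonic hdeg horth κ j k hk

end
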